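/- arXiv:1412.0392 — 2 statements merged into one kernel-verified Lean document; each statement's English description precedes it below -/
import Mathlib

section
/- The number of ordered k-tuples (m_1,...,m_k) of integers each at least 2 with m_1·...·m_k = m equals the alternating sum over i from 0 to k-1 of (-1)^i C(k,i) times the product over j of C(α_j + k - i - 1, k - i - 1). -/
/-!
Writing each entry of a tuple with product `m` in terms of its prime factorization, the tuples of
positive integers with product `m` correspond, prime by prime, to tuples of exponents summing to
`α_p`; by stars and bars there are `∏_p multichoose k α_p` of them. The tuples with all entries
`≥ 2` are those avoiding every event `m_i = 1`, and a tuple that is `1` on a set `s` of positions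
is a tuple with product `m` on the remaining `k - #s` positions, so inclusion-exclusion gives the
alternating sum. Its `i = k` term vanishes because `m > 1` has a prime factor.
-/

/-- ν_ℓ(m,k): number of ordered k-tuples of integers each ≥ ℓ with product m. -/
noncomputable def nu (l m k : ℕ) : ℕ :=
  Nat.card {t : Fin k → ℕ // (∀ i, l ≤ t i) ∧ ∏ i, t i = m}

open Finset

theorem Nat.factorization_prod_pow_of_prime {s : Finset ℕ} (hs : ∀ p ∈ s, p.Prime) (e : s → ℕ)
    (p : s) : (∏ q : s, (q : ℕ) ^ e q).factorization p = e p := by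
  rw [Nat.factorization_prod fun (q : s) _ => pow_ne_zero _ (hs q q.2).ne_zero,
    Finsupp.finsetSum_apply]
  simp [fun q : s => (hs q q.2).factorization_pow, Finsupp.single_apply]

theorem Nat.multichoose_succ_left_eq_choose (n k : ℕ) :
    (n + 1).multichoose k = (k + n).choose n := by
  rw [Nat.multichoose_eq, add_right_comm, Nat.add_sub_cancel, add_comm, Nat.choose_symm_add]

theorem prod_primeFactors_multichoose_zero {m : ℕ} (hm : 1 < m) :
    ∏ p ∈ m.primeFactors, (0 : ℕ).multichoose (m.factorization p) = 0 := by
  obtain ⟨p, hp⟩ := Nat.nonempty_primeFactors.mpr hm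
  have hp0 : m.factorization p ≠ 0 := Finsupp.mem_support_iff.mp (m.support_factorization ▸ hp)
  exact prod_eq_zero hp (by rw [Nat.multichoose_eq, Nat.choose_eq_zero_of_lt (by omega)])

section

variable {ι : Type*} [Fintype ι]

theorem ne_zero_of_prod_eq {t : ι → ℕ} {m : ℕ} (ht : ∏ i, t i = m) (hm : m ≠ 0) (i : ι) :
    t i ≠ 0 :=
  prod_ne_zero_iff.mp (ht ▸ hm) i (mem_univ i)

def prodEqEquivPiSumEq {m : ℕ} (hm : m ≠ 0) :
    {t : ι → ℕ // ∏ i, t i = m} ≃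
      ((p : m.primeFactors) → {e : ι → ℕ // ∑ i, e i = m.factorization p}) where
  toFun t p := ⟨fun i => (t.1 i).factorization p, by
    rw [← Finsupp.finsetSum_apply, ← Nat.factorization_prod fun i _ => ne_zero_of_prod_eq t.2 hm i,
      t.2]⟩
  invFun e := ⟨fun i => ∏ p : m.primeFactors, (p : ℕ) ^ (e p).1 i, by
    rw [prod_comm]
    simp_rw [prod_pow_eq_pow_sum, (e _).2]
    rw [prod_coe_sort m.primeFactors fun p => p ^ m.factorization p]
    exact Nat.prod_factorization_pow_eq_self hm⟩
  left_inv := by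
    rintro ⟨t, ht⟩
    ext i
    have hdvd : t i ∣ m := ht ▸ dvd_prod_of_mem t (mem_univ i)
    change _ = t i
    conv_rhs => rw [← Nat.prod_factorization_pow_eq_self (ne_zero_of_prod_eq ht hm i)]
    rw [Finsupp.prod_of_support_subset _ (Nat.primeFactors_mono hdvd hm) _ (fun _ _ => pow_zero _)]
    exact prod_coe_sort m.primeFactors fun p => p ^ (t i).factorization p
  right_inv e := by
    ext p i
    exact Nat.factorization_prod_pow_of_prime (fun _ => Nat.prime_of_mem_primeFactors) _ p

theorem natCard_sum_eq (n : ℕ) :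
    Nat.card {e : ι → ℕ // ∑ i, e i = n} = (Fintype.card ι).multichoose n := by
  classical
  rw [← Sym.card_sym_eq_multichoose, ← card_univ, ← sym_univ, ← card_map,
    map_sym_eq_piAntidiag, ← Fintype.card_coe, ← Nat.card_eq_fintype_card]
  exact Nat.card_congr (Equiv.subtypeEquivRight fun e => by simp)

theorem natCard_prod_eq {m : ℕ} (hm : m ≠ 0) :
    Nat.card {t : ι → ℕ // ∏ i, t i = m} =
      ∏ p ∈ m.primeFactors, (Fintype.card ι).multichoose (m.factorization p) := by
  rw [Nat.card_congr (prodEqEquivPiSumEq hm), Nat.card_pi]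
  simp_rw [natCard_sum_eq]
  exact prod_coe_sort m.primeFactors fun p => (Fintype.card ι).multichoose (m.factorization p)

theorem finite_prod_eq {m : ℕ} (hm : m ≠ 0) : Finite {t : ι → ℕ // ∏ i, t i = m} :=
  have (n : ℕ) : Finite {e : ι → ℕ // ∑ i, e i = n} := by
    classical
    exact .of_equiv _ (Equiv.subtypeEquivRight fun e => by simp : piAntidiag univ n ≃ _)
  .of_equiv _ (prodEqEquivPiSumEq hm).symm

theorem prod_subtype_not_eq_prod {M : Type*} [CommMonoid M] (p : ι → Prop) [DecidablePred p]
    {f : ι → M} (hf : ∀ i, p i → f i = 1) : ∏ i : {i // ¬p i}, f i = ∏ i, f i := by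
  rw [← Fintype.prod_subtype_mul_prod_subtype p f, Fintype.prod_eq_one (fun i : {i // p i} => f i)
    fun i => hf i i.2, one_mul]

def prodEqEquivOfEqOne (p : ι → Prop) [DecidablePred p] (m : ℕ) :
    {t : ι → ℕ // ∏ i, t i = m ∧ ∀ i, p i → t i = 1} ≃ {t : {i // ¬p i} → ℕ // ∏ i, t i = m} where
  toFun t := ⟨fun i => t.1 i, (prod_subtype_not_eq_prod p t.2.2).trans t.2.1⟩
  invFun t := ⟨fun i => if h : p i then 1 else t.1 ⟨i, h⟩,
    (prod_subtype_not_eq_prod p fun i h => dif_pos h).symm.trans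
      ((prod_congr rfl fun i _ => dif_neg i.2).trans t.2),
    fun i h => dif_pos h⟩
  left_inv t := by
    ext i
    by_cases h : p i
    · simp [h, t.2.2 i h]
    · simp [h]
  right_inv t := by
    ext i
    simp [i.2]

theorem natCard_prod_eq_of_eq_one [DecidableEq ι] {m : ℕ} (hm : m ≠ 0) (s : Finset ι) :
    Nat.card {t : ι → ℕ // ∏ i, t i = m ∧ ∀ i ∈ s, t i = 1} =
      ∏ p ∈ m.primeFactors, (Fintype.card ι - #s).multichoose (m.factorization p) := by
  rw [Nat.card_congr (prodEqEquivOfEqOne (· ∈ s) m), natCard_prod_eq hm,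
    Fintype.card_subtype_compl, Fintype.card_coe]

theorem natCard_two_le_prod_eq {m : ℕ} (hm : m ≠ 0) :
    (Nat.card {t : ι → ℕ // (∀ i, 2 ≤ t i) ∧ ∏ i, t i = m} : ℤ) =
      ∑ j ∈ range (Fintype.card ι + 1), (-1 : ℤ) ^ j * (Fintype.card ι).choose j *
        ∏ p ∈ m.primeFactors, (Fintype.card ι - j).multichoose (m.factorization p) := by
  classical
  have := finite_prod_eq (ι := ι) hm
  let _ := Fintype.ofFinite {t : ι → ℕ // ∏ i, t i = m}
  let S (i : ι) : Finset {t : ι → ℕ // ∏ i, t i = m} := {t | t.1 i = 1}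
  have card_inf (s : Finset ι) : #(s.inf S) =
      ∏ p ∈ m.primeFactors, (Fintype.card ι - #s).multichoose (m.factorization p) := by
    rw [← natCard_prod_eq_of_eq_one hm,
      ← Nat.card_congr (Equiv.subtypeSubtypeEquivSubtypeInter _ _), Nat.card_eq_fintype_card,
      Fintype.card_subtype]
    congr 1
    ext t
    simp [S, mem_inf]
  have card_inf_compl : #(univ.inf fun i => (S i)ᶜ) =
      Nat.card {t : ι → ℕ // (∀ i, 2 ≤ t i) ∧ ∏ i, t i = m} := by
    have two_le_iff (t : ι → ℕ) : (∀ i, 2 ≤ t i) ∧ ∏ i, t i = m ↔ ∏ i, t i = m ∧ ∀ i, t i ≠ 1 :=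
      ⟨fun ⟨h2, ht⟩ => ⟨ht, fun i => by have := h2 i; omega⟩,
        fun ⟨ht, h1⟩ => ⟨fun i => by have := ne_zero_of_prod_eq ht hm i; have := h1 i; omega, ht⟩⟩
    rw [Nat.card_congr ((Equiv.subtypeEquivRight two_le_iff).trans
        (Equiv.subtypeSubtypeEquivSubtypeInter _ _).symm), Nat.card_eq_fintype_card,
      Fintype.card_subtype]
    congr 1
    ext t
    simp [S, mem_inf]
  rw [← card_inf_compl, inclusion_exclusion_card_inf_compl]
  simp_rw [card_inf]
  rw [sum_powerset_apply_card (fun j => (-1 : ℤ) ^ j *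
    ((∏ p ∈ m.primeFactors, (Fintype.card ι - j).multichoose (m.factorization p) : ℕ) : ℤ)),
    card_univ]
  exact sum_congr rfl fun j _ => by rw [nsmul_eq_mul]; push_cast; ring

end

theorem stmt_1_general (m k : ℕ) (hm : 1 < m) :
    (nu 2 m k : ℤ) = ∑ i ∈ Finset.range k, (-1 : ℤ) ^ i * Nat.choose k i *
      ∏ p ∈ m.primeFactors, Nat.choose (m.factorization p + k - i - 1) (k - i - 1) := by
  rw [nu, natCard_two_le_prod_eq (by omega), Fintype.card_fin, sum_range_succ, Nat.sub_self,
    prod_primeFactors_multichoose_zero hm, Nat.cast_zero, mul_zero, add_zero]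
  refine sum_congr rfl fun i hi => ?_
  obtain ⟨j, rfl⟩ : ∃ j, k = i + j + 1 := ⟨k - i - 1, by have := mem_range.mp hi; omega⟩
  simp_rw [show ∀ a, a + (i + j + 1) - i - 1 = a + j by omega,
    show i + j + 1 - i - 1 = j by omega, show i + j + 1 - i = j + 1 by omega,
    Nat.multichoose_succ_left_eq_choose]

theorem stmt_1 (m k : ℕ) (hm : 1 < m) (hk : 0 < k) :
    (nu 2 m k : ℤ) = ∑ i ∈ Finset.range k, (-1 : ℤ) ^ i * Nat.choose k i *
      ∏ p ∈ m.primeFactors, Nat.choose (m.factorization p + k - i - 1) (k - i - 1) :=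
  stmt_1_general m k hm
end

section
/- For m > 1 with prime factorization p_1^{α_1}···p_n^{α_n}, the number of triples (x,y,z) of positive integers with x ≤ y ≤ z and xyz = m equals (1/6)∏_j C(α_j+2,2) + (1/2)∏_j ⌊(α_j+2)/2⌋ + ε_3(m)/3, where ε_3(m) = 1 if m is a perfect cube and 0 otherwise. -/
open scoped Classical

/-- ε_i(m): 1 if m is a perfect i-th power, else 0. -/
noncomputable def eps (i m : ℕ) : ℕ := if ∃ e : ℕ, e ^ i = m then 1 else 0

/-!
The sorted triples are the orbits of `Perm (Fin 3)` acting on the ordered factorizations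
`m = x * y * z`, so by Burnside six times their number is `∑ σ, #Fix σ`. The identity fixes all
ordered factorizations; each of the three transpositions fixes those of the form `(x, x, z)`, i.e.
the solutions of `x ^ 2 * z = m`; the two 3-cycles fix `(e, e, e)`, which exists iff `m` is a cube.
Counting solutions of `∏ xᵢ ^ wᵢ = m` is multiplicative in `m` (split every entry by its `gcd` with
the two coprime factors), and over `p ^ α` it counts solutions of `∑ wᵢ aᵢ = α`: there are
`C(α + 2, 2)` of `a + b + c = α` and `⌊(α + 2) / 2⌋` of `2 * a + c = α`.
-/

open Finset Equiv MulAction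

namespace MulAction

lemma sum_natCard_fixedBy_eq_natCard_orbits_mul (G X : Type*) [Group G] [MulAction G X]
    [Fintype G] [Finite X] :
    ∑ g : G, Nat.card (fixedBy X g) = Nat.card (orbitRel.Quotient G X) * Nat.card G := by
  have := Fintype.ofFinite X
  simp only [Nat.card_eq_fintype_card]
  exact sum_card_fixedBy_eq_card_orbits_mul_card_group G X

lemma natCard_fixedBy_conj {G X : Type*} [Group G] [MulAction G X] (g h : G) :
    Nat.card (fixedBy X (h * g * h⁻¹)) = Nat.card (fixedBy X g) := by
  rw [← smul_fixedBy, Set.natCard_smul_set]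

end MulAction

lemma natCard_sum_eq_choose {ι : Type*} [Fintype ι] (k : ℕ) :
    Nat.card {v : ι → ℕ // ∑ i, v i = k} = (Fintype.card ι + k - 1).choose k := by
  rw [← Nat.card_eq_fintype_card, ← Sym.natCard_sym_eq_choose]
  refine Nat.card_congr ((Sym.equivNatSum ι k).trans ?_).symm
  exact Finsupp.equivFunOnFinite.subtypeEquiv fun P => by simp [Finsupp.sum_fintype]

lemma natCard_two_mul_add_eq (k : ℕ) :
    Nat.card {v : Fin 2 → ℕ // ∑ i, ![2, 1] i * v i = k} = k / 2 + 1 := by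
  refine Nat.card_eq_of_equiv_fin
    { toFun := fun v => ⟨v.1 0, ?_⟩
      invFun := fun a => ⟨![a, k - 2 * a], ?_⟩
      left_inv := fun v => ?_
      right_inv := fun a => rfl }
  · have := v.2
    simp only [Fin.sum_univ_two, Matrix.cons_val] at this
    omega
  · have := a.2
    simp only [Fin.sum_univ_two, Matrix.cons_val]
    omega
  · obtain ⟨v, hv⟩ := v
    simp only [Fin.sum_univ_two, Matrix.cons_val] at hv
    ext i
    fin_cases i
    · rfl
    · change k - 2 * v 0 = v 1
      omega

lemma natCard_pow_eq_eq_eps {k : ℕ} (hk : k ≠ 0) (m : ℕ) :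
    Nat.card {e : ℕ // e ^ k = m} = eps k m := by
  unfold eps
  split_ifs with h
  · obtain ⟨e, rfl⟩ := h
    exact Nat.card_eq_one_iff_unique.mpr
      ⟨⟨fun a b => Subtype.ext (Nat.pow_left_injective hk (a.2.trans b.2.symm))⟩, ⟨⟨e, rfl⟩⟩⟩
  · have : IsEmpty {e : ℕ // e ^ k = m} := ⟨fun e => h ⟨e.1, e.2⟩⟩
    exact Nat.card_of_isEmpty

lemma Nat.Coprime.gcd_mul_eq_left_of_dvd {a b x y : ℕ} (hab : a.Coprime b) (hx : x ∣ a)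
    (hy : y ∣ b) : (x * y).gcd a = x := by
  rw [Nat.Coprime.gcd_mul_right_cancel x (hab.symm.coprime_dvd_left hy), Nat.gcd_eq_left hx]

section PowProd

variable {ι : Type*} [Fintype ι] {w : ι → ℕ}

def prodPowEq (w : ι → ℕ) (n : ℕ) : Set (ι → ℕ) := {f | ∏ i, f i ^ w i = n}

@[simp] lemma mem_prodPowEq {n : ℕ} {f : ι → ℕ} : f ∈ prodPowEq w n ↔ ∏ i, f i ^ w i = n :=
  Iff.rfl

lemma dvd_of_mem_prodPowEq {n : ℕ} {f : ι → ℕ} (hf : f ∈ prodPowEq w n) {i : ι} (hw : w i ≠ 0) :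
    f i ∣ n :=
  hf ▸ (dvd_pow_self _ hw).trans (dvd_prod_of_mem _ (mem_univ i))

lemma prodPowEq_one (hw : ∀ i, w i ≠ 0) : prodPowEq w 1 = {1} := by
  ext f
  simp [pow_eq_one_iff, hw, funext_iff]

lemma finite_prodPowEq (hw : ∀ i, w i ≠ 0) {n : ℕ} (hn : n ≠ 0) : (prodPowEq w n).Finite :=
  (Set.Finite.pi fun _ => (n.divisors : Set ℕ).toFinite).subset fun _ hf i _ =>
    Nat.mem_divisors.mpr ⟨dvd_of_mem_prodPowEq hf (hw i), hn⟩

lemma prod_pow_gcd_eq_left {a b : ℕ} (hab : a.Coprime b) (hw : ∀ i, w i ≠ 0) {f : ι → ℕ}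
    (hf : f ∈ prodPowEq w (a * b)) : ∏ i, (f i).gcd a ^ w i = a := by
  set u := ∏ i, (f i).gcd a ^ w i
  set v := ∏ i, (f i).gcd b ^ w i
  have huv : u * v = a * b := by
    rw [← mem_prodPowEq.mp hf, ← prod_mul_distrib]
    refine prod_congr rfl fun i _ => ?_
    rw [← mul_pow, (Nat.gcd_mul_gcd_eq_iff_dvd_mul_of_coprime hab).mpr
      (dvd_of_mem_prodPowEq hf (hw i))]
  have hub : u.Coprime b := Nat.Coprime.prod_left fun i _ =>
    (hab.coprime_dvd_left (Nat.gcd_dvd_right _ _)).pow_left _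
  have hva : v.Coprime a := Nat.Coprime.prod_left fun i _ =>
    (hab.symm.coprime_dvd_left (Nat.gcd_dvd_right _ _)).pow_left _
  exact Nat.dvd_antisymm (hub.dvd_of_dvd_mul_right ⟨v, huv.symm⟩)
    (hva.symm.dvd_of_dvd_mul_right ⟨b, huv⟩)

def prodPowEqMulEquiv {a b : ℕ} (hab : a.Coprime b) (hw : ∀ i, w i ≠ 0) :
    prodPowEq w (a * b) ≃ prodPowEq w a × prodPowEq w b where
  toFun f := (⟨fun i => (f.1 i).gcd a, prod_pow_gcd_eq_left hab hw f.2⟩,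
    ⟨fun i => (f.1 i).gcd b, prod_pow_gcd_eq_left hab.symm hw (mul_comm a b ▸ f.2)⟩)
  invFun g := ⟨g.1.1 * g.2.1, by
    simp only [mem_prodPowEq, Pi.mul_apply, mul_pow, prod_mul_distrib]
    rw [g.1.2, g.2.2]⟩
  left_inv f := Subtype.ext <| funext fun i =>
    (Nat.gcd_mul_gcd_eq_iff_dvd_mul_of_coprime hab).mpr (dvd_of_mem_prodPowEq f.2 (hw i))
  right_inv g := by
    obtain ⟨⟨x, hx⟩, ⟨y, hy⟩⟩ := g
    refine Prod.ext (Subtype.ext <| funext fun i => ?_) (Subtype.ext <| funext fun i => ?_)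
    · exact hab.gcd_mul_eq_left_of_dvd (dvd_of_mem_prodPowEq hx (hw i))
        (dvd_of_mem_prodPowEq hy (hw i))
    · show (x i * y i).gcd b = y i
      rw [mul_comm]
      exact hab.symm.gcd_mul_eq_left_of_dvd (dvd_of_mem_prodPowEq hy (hw i))
        (dvd_of_mem_prodPowEq hx (hw i))

lemma natCard_prodPowEq_mul {a b : ℕ} (hab : a.Coprime b) (hw : ∀ i, w i ≠ 0) :
    Nat.card (prodPowEq w (a * b)) = Nat.card (prodPowEq w a) * Nat.card (prodPowEq w b) := by
  rw [Nat.card_congr (prodPowEqMulEquiv hab hw), Nat.card_prod]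

lemma natCard_prodPowEq_eq_prod (hw : ∀ i, w i ≠ 0) {n : ℕ} (hn : n ≠ 0) :
    Nat.card (prodPowEq w n) =
      ∏ p ∈ n.primeFactors, Nat.card (prodPowEq w (p ^ n.factorization p)) := by
  rw [Nat.multiplicative_factorization (fun n => Nat.card (prodPowEq w n))
    (fun a b hab => natCard_prodPowEq_mul hab hw) (by simp [prodPowEq_one hw]) hn]
  rfl

lemma prod_pow_pow_eq_pow_sum (p : ℕ) (w v : ι → ℕ) :
    ∏ i, (p ^ v i) ^ w i = p ^ ∑ i, w i * v i := by
  simp_rw [← pow_mul, mul_comm, prod_pow_eq_pow_sum]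

lemma pow_factorization_eq_of_mem_prodPowEq {p k : ℕ} (hp : p.Prime) {f : ι → ℕ}
    (hf : f ∈ prodPowEq w (p ^ k)) {i : ι} (hw : w i ≠ 0) : p ^ (f i).factorization p = f i := by
  obtain ⟨e, -, he⟩ := (Nat.dvd_prime_pow hp).mp (dvd_of_mem_prodPowEq hf hw)
  simp [he, hp.factorization_self]

def prodPowEqPrimePowEquiv {p : ℕ} (hp : p.Prime) (hw : ∀ i, w i ≠ 0) (k : ℕ) :
    prodPowEq w (p ^ k) ≃ {v : ι → ℕ // ∑ i, w i * v i = k} where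
  toFun f := ⟨fun i => (f.1 i).factorization p, by
    refine Nat.pow_right_injective hp.two_le ?_
    dsimp only
    rw [← prod_pow_pow_eq_pow_sum]
    simp only [pow_factorization_eq_of_mem_prodPowEq hp f.2 (hw _)]
    exact f.2⟩
  invFun v := ⟨fun i => p ^ v.1 i, by rw [mem_prodPowEq, prod_pow_pow_eq_pow_sum, v.2]⟩
  left_inv f := Subtype.ext <| funext fun i => pow_factorization_eq_of_mem_prodPowEq hp f.2 (hw i)
  right_inv v := Subtype.ext <| funext fun i => by simp [hp.factorization_self]

end PowProd

lemma natCard_prodPowEq_fin_three_one {m : ℕ} (hm : m ≠ 0) :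
    Nat.card (prodPowEq (fun _ : Fin 3 => 1) m) =
      ∏ p ∈ m.primeFactors, (m.factorization p + 2).choose 2 := by
  rw [natCard_prodPowEq_eq_prod (fun _ => one_ne_zero) hm]
  refine prod_congr rfl fun p hp => ?_
  rw [Nat.card_congr (prodPowEqPrimePowEquiv (Nat.prime_of_mem_primeFactors hp)
    (fun _ => one_ne_zero) _)]
  simp only [one_mul]
  rw [natCard_sum_eq_choose, Fintype.card_fin, ← Nat.choose_symm_add]
  congr 1
  omega

lemma natCard_prodPowEq_two_one {m : ℕ} (hm : m ≠ 0) :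
    Nat.card (prodPowEq ![2, 1] m) = ∏ p ∈ m.primeFactors, (m.factorization p + 2) / 2 := by
  have hw : ∀ i, ![2, 1] i ≠ 0 := by decide
  rw [natCard_prodPowEq_eq_prod hw hm]
  refine prod_congr rfl fun p hp => ?_
  rw [Nat.card_congr (prodPowEqPrimePowEquiv (Nat.prime_of_mem_primeFactors hp) hw _),
    natCard_two_mul_add_eq]
  omega

section PermAction

variable {ι : Type*} [Fintype ι] {c n : ℕ}

instance : MulAction (Perm ι) (prodPowEq (fun _ : ι => c) n) where
  smul σ f := ⟨f.1 ∘ σ.symm, (Equiv.prod_comp σ.symm fun i => f.1 i ^ c).trans f.2⟩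
  one_smul _ := rfl
  mul_smul _ _ _ := rfl

lemma apply_eq_of_mem_fixedBy {σ : Perm ι} {f : prodPowEq (fun _ : ι => c) n}
    (hf : f ∈ fixedBy _ σ) (i : ι) : f.1 (σ.symm i) = f.1 i :=
  congrFun (congrArg Subtype.val hf) i

/-- Sorting picks the unique monotone representative of each orbit. -/
def orbitsEquivMonotone {k : ℕ} :
    orbitRel.Quotient (Perm (Fin k)) (prodPowEq (fun _ : Fin k => c) n) ≃
      {f : prodPowEq (fun _ : Fin k => c) n // Monotone f.1} where
  toFun := Quotient.lift (fun f => ⟨(Tuple.sort f.1)⁻¹ • f, Tuple.monotone_sort f.1⟩) <| by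
    rintro f g ⟨σ, rfl⟩
    exact Subtype.ext <| Subtype.ext <| Tuple.comp_perm_comp_sort_eq_comp_sort
  invFun f := ⟦f.1⟧
  left_inv := by
    rintro ⟨f⟩
    exact Quotient.sound ⟨_, rfl⟩
  right_inv f := Subtype.ext <| Subtype.ext <| by
    change f.1.1 ∘ Tuple.sort f.1.1 = f.1.1
    rw [Tuple.sort_eq_refl_iff_monotone.mpr f.2]
    rfl

end PermAction

section Triples

variable {n : ℕ}

def fixedBySwapEquiv :
    fixedBy (prodPowEq (fun _ : Fin 3 => 1) n) (swap (0 : Fin 3) 1) ≃ prodPowEq ![2, 1] n where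
  toFun f := ⟨![f.1.1 0, f.1.1 2], by
    have h01 : f.1.1 1 = f.1.1 0 := apply_eq_of_mem_fixedBy f.2 0
    have := f.1.2
    simp only [mem_prodPowEq, Fin.prod_univ_three, Fin.prod_univ_two, pow_one] at this ⊢
    rw [h01] at this
    simpa [sq] using this⟩
  invFun v := ⟨⟨![v.1 0, v.1 0, v.1 1], by
    have := v.2
    simp only [mem_prodPowEq, Fin.prod_univ_three, Fin.prod_univ_two, pow_one] at this ⊢
    simpa [sq] using this⟩, by
    refine Subtype.ext (funext fun i => ?_)
    fin_cases i <;> rfl⟩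
  left_inv f := by
    have h01 : f.1.1 1 = f.1.1 0 := apply_eq_of_mem_fixedBy f.2 0
    refine Subtype.ext (Subtype.ext (funext fun i => ?_))
    fin_cases i
    · rfl
    · exact h01.symm
    · rfl
  right_inv v := by
    refine Subtype.ext (funext fun i => ?_)
    fin_cases i <;> rfl

def fixedByRotateEquiv :
    fixedBy (prodPowEq (fun _ : Fin 3 => 1) n) (finRotate 3) ≃ {e : ℕ // e ^ 3 = n} where
  toFun f := ⟨f.1.1 0, by
    have h20 : f.1.1 2 = f.1.1 0 := apply_eq_of_mem_fixedBy f.2 0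
    have h12 : f.1.1 1 = f.1.1 2 := apply_eq_of_mem_fixedBy f.2 2
    have := f.1.2
    simp only [mem_prodPowEq, Fin.prod_univ_three, pow_one] at this
    rw [h12, h20] at this
    simpa [pow_succ] using this⟩
  invFun e := ⟨⟨fun _ => e.1, by simpa [pow_succ] using e.2⟩, rfl⟩
  left_inv f := by
    have h20 : f.1.1 2 = f.1.1 0 := apply_eq_of_mem_fixedBy f.2 0
    have h12 : f.1.1 1 = f.1.1 2 := apply_eq_of_mem_fixedBy f.2 2
    refine Subtype.ext (Subtype.ext (funext fun i => ?_))
    fin_cases i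
    · rfl
    · exact (h12.trans h20).symm
    · exact h20.symm
  right_inv e := rfl

lemma sum_natCard_fixedBy_perm_fin_three :
    ∑ σ : Perm (Fin 3), Nat.card (fixedBy (prodPowEq (fun _ : Fin 3 => 1) n) σ) =
      Nat.card (prodPowEq (fun _ : Fin 3 => 1) n) + 3 * Nat.card (prodPowEq ![2, 1] n) +
        2 * Nat.card {e : ℕ // e ^ 3 = n} := by
  have huniv : (univ : Finset (Perm (Fin 3))) =
      {1, swap 0 1, swap 0 2, swap 1 2, finRotate 3, (finRotate 3)⁻¹} := by decide
  have h02 : Nat.card (fixedBy (prodPowEq (fun _ : Fin 3 => 1) n) (swap (0 : Fin 3) 2)) =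
      Nat.card (fixedBy (prodPowEq (fun _ : Fin 3 => 1) n) (swap (0 : Fin 3) 1)) := by
    rw [show swap (0 : Fin 3) 2 = swap 1 2 * swap 0 1 * (swap 1 2)⁻¹ by decide,
      natCard_fixedBy_conj]
  have h12 : Nat.card (fixedBy (prodPowEq (fun _ : Fin 3 => 1) n) (swap (1 : Fin 3) 2)) =
      Nat.card (fixedBy (prodPowEq (fun _ : Fin 3 => 1) n) (swap (0 : Fin 3) 1)) := by
    rw [show swap (1 : Fin 3) 2 = swap 0 2 * swap 0 1 * (swap 0 2)⁻¹ by decide,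
      natCard_fixedBy_conj]
  rw [huniv, sum_insert (by decide), sum_insert (by decide), sum_insert (by decide),
    sum_insert (by decide), sum_insert (by decide), sum_singleton, fixedBy_one_eq_univ,
    Nat.card_univ, fixedBy_inv, h02, h12, Nat.card_congr fixedBySwapEquiv,
    Nat.card_congr fixedByRotateEquiv]
  ring

def sortedTriplesEquiv (hn : n ≠ 0) :
    {t : ℕ × ℕ × ℕ // 0 < t.1 ∧ t.1 ≤ t.2.1 ∧ t.2.1 ≤ t.2.2 ∧ t.1 * t.2.1 * t.2.2 = n} ≃
      {f : prodPowEq (fun _ : Fin 3 => 1) n // Monotone f.1} where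
  toFun t := ⟨⟨![t.1.1, t.1.2.1, t.1.2.2], by
      simpa [Fin.prod_univ_three] using t.2.2.2.2⟩,
    Fin.monotone_iff_le_succ.mpr <| Fin.forall_fin_two.mpr ⟨t.2.2.1, t.2.2.2.1⟩⟩
  invFun f := ⟨(f.1.1 0, f.1.1 1, f.1.1 2), by
    have hprod : f.1.1 0 * f.1.1 1 * f.1.1 2 = n := by
      simpa only [mem_prodPowEq, Fin.prod_univ_three, pow_one] using f.1.2
    refine ⟨Nat.pos_of_ne_zero fun h0 => hn ?_, f.2 (by decide), f.2 (by decide), hprod⟩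
    rw [← hprod, show f.1.1 0 = 0 from h0, zero_mul, zero_mul]⟩
  left_inv t := rfl
  right_inv f := Subtype.ext <| Subtype.ext <| funext fun i => by fin_cases i <;> rfl

end Triples

theorem stmt_10 (m : ℕ) (hm : 1 < m) :
    (Nat.card {t : ℕ × ℕ × ℕ //
        0 < t.1 ∧ t.1 ≤ t.2.1 ∧ t.2.1 ≤ t.2.2 ∧ t.1 * t.2.1 * t.2.2 = m} : ℚ) =
      (1 / 6) * ∏ p ∈ m.primeFactors, (Nat.choose (m.factorization p + 2) 2 : ℚ) +
      (1 / 2) * ∏ p ∈ m.primeFactors, (((m.factorization p + 2) / 2 : ℕ) : ℚ) +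
      (eps 3 m : ℚ) / 3 := by
  have hm0 : m ≠ 0 := by omega
  have := (finite_prodPowEq (fun _ : Fin 3 => one_ne_zero) hm0).to_subtype
  have hburnside := sum_natCard_fixedBy_eq_natCard_orbits_mul (Perm (Fin 3))
    (prodPowEq (fun _ : Fin 3 => 1) m)
  rw [sum_natCard_fixedBy_perm_fin_three, natCard_prodPowEq_fin_three_one hm0,
    natCard_prodPowEq_two_one hm0, natCard_pow_eq_eq_eps three_ne_zero,
    Nat.card_congr orbitsEquivMonotone, ← Nat.card_congr (sortedTriplesEquiv hm0),
    Nat.card_perm, Nat.card_fin] at hburnside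
  have hq := congrArg (Nat.cast : ℕ → ℚ) hburnside
  push_cast at hq
  linarith
end
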